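/- arXiv:2508.12327 — 2 statements merged into one kernel-verified Lean document; each statement's English description precedes it below -/
import Mathlib

section
/- Let f : ℝ^d → ℝ be L-smooth. For the update x' = x − η(sign(v) + λ x), with η > 0, λ ≥ 0, and ‖x' − x‖² ≤ 4η²d, one has f(x') ≤ f(x) + 2η√d‖∇f(x) − v‖ − η(1 − λ‖x‖_∞)‖∇f(x)‖_1 + 2η²Ld. -/
open Finset
local notation "⟪" x ", " y "⟫" => (inner ℝ x y : ℝ)

/-- The ℓ∞ (max) norm on `ℝ^d`. -/
noncomputable def normInf {d : ℕ} (x : EuclideanSpace ℝ (Fin d)) : ℝ := ⨆ i, |x i|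

/-- The ℓ1 norm on `ℝ^d`. -/
noncomputable def norm1 {d : ℕ} (x : EuclideanSpace ℝ (Fin d)) : ℝ := ∑ i, |x i|

/-- The coordinate-wise sign vector, with entries in `{-1, 1}`. -/
noncomputable def sgnV {d : ℕ} (v : EuclideanSpace ℝ (Fin d)) : EuclideanSpace ℝ (Fin d) :=
  (WithLp.equiv 2 (Fin d → ℝ)).symm (fun i => if v i < 0 then -1 else 1)

/-- Descent lemma: an `L`-smooth function is bounded above by its quadratic model. -/
theorem descent_lemma {F : Type*} [NormedAddCommGroup F] [InnerProductSpace ℝ F]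
    [CompleteSpace F] (f : F → ℝ) (g : F → F) (L : ℝ) (hL : 0 ≤ L)
    (hdiff : ∀ y, HasGradientAt f (g y) y)
    (hsmooth : ∀ y z, ‖g y - g z‖ ≤ L * ‖y - z‖) (x y : F) :
    f y ≤ f x + ⟪g x, y - x⟫ + L / 2 * ‖y - x‖ ^ 2 := by
  set u := y - x with hu
  set φ : ℝ → ℝ := fun t => f (x + t • u) - t * ⟪g x, u⟫ - L / 2 * t ^ 2 * ‖u‖ ^ 2 with hφ
  have hc : ∀ t : ℝ, HasDerivAt (fun s : ℝ => x + s • u) u t := by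
    intro t
    simpa using ((hasDerivAt_id t).smul_const u).const_add x
  have hφ' : ∀ t : ℝ, HasDerivAt φ
      (⟪g (x + t • u), u⟫ - ⟪g x, u⟫ - L / 2 * (2 * t) * ‖u‖ ^ 2) t := by
    intro t
    have h1 : HasDerivAt (fun s : ℝ => f (x + s • u)) (⟪g (x + t • u), u⟫) t := by
      have := ((hdiff (x + t • u)).hasFDerivAt).comp_hasDerivAt t (hc t)
      exact this
    have h2 : HasDerivAt (fun s : ℝ => s * ⟪g x, u⟫) (⟪g x, u⟫) t := by
      simpa using (hasDerivAt_id t).mul_const (⟪g x, u⟫)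
    have h3 : HasDerivAt (fun s : ℝ => L / 2 * s ^ 2 * ‖u‖ ^ 2) (L / 2 * (2 * t) * ‖u‖ ^ 2) t := by
      have h3a : HasDerivAt (fun s : ℝ => s ^ 2) (2 * t) t := by simpa using hasDerivAt_pow 2 t
      have h3b := (h3a.const_mul (L / 2)).mul_const (‖u‖ ^ 2)
      convert h3b using 1 <;> ring
    exact (h1.sub h2).sub h3
  have hanti : AntitoneOn φ (Set.Icc 0 1) := by
    apply antitoneOn_of_deriv_nonpos (convex_Icc 0 1)
    · exact Continuous.continuousOn (by
        have : Continuous φ := by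
          have : Differentiable ℝ φ := fun t => (hφ' t).differentiableAt
          exact this.continuous
        exact this)
    · intro t _
      exact (hφ' t).differentiableAt.differentiableWithinAt
    · intro t ht
      rw [interior_Icc] at ht
      rw [(hφ' t).deriv]
      have hcs : ⟪g (x + t • u) - g x, u⟫ ≤ ‖g (x + t • u) - g x‖ * ‖u‖ :=
        real_inner_le_norm _ _
      have hlip : ‖g (x + t • u) - g x‖ ≤ L * (t * ‖u‖) := by
        have := hsmooth (x + t • u) x
        simpa [norm_smul, abs_of_nonneg ht.1.le] using this
      have : ⟪g (x + t • u), u⟫ - ⟪g x, u⟫ ≤ L * t * ‖u‖ ^ 2 := by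
        rw [← inner_sub_left]
        calc ⟪g (x + t • u) - g x, u⟫ ≤ ‖g (x + t • u) - g x‖ * ‖u‖ := hcs
          _ ≤ L * (t * ‖u‖) * ‖u‖ := by
              apply mul_le_mul_of_nonneg_right hlip (norm_nonneg _)
          _ = L * t * ‖u‖ ^ 2 := by ring
      nlinarith
  have h01 : φ 1 ≤ φ 0 := hanti (by simp) (by simp) zero_le_one
  simp only [hφ, one_smul, zero_smul, add_zero, zero_mul, zero_pow, mul_zero, sub_zero,
    one_mul, one_pow, mul_one] at h01
  have : f (x + u) - ⟪g x, u⟫ - L / 2 * ‖u‖ ^ 2 ≤ f x := by linarith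
  have hxy : x + u = y := by simp [hu]
  rw [hxy] at this
  linarith

/-- ℓ1 norm is bounded by `√d` times the Euclidean norm. -/
theorem norm1_le_sqrt_mul_norm {d : ℕ} (w : EuclideanSpace ℝ (Fin d)) :
    norm1 w ≤ Real.sqrt d * ‖w‖ := by
  set a : EuclideanSpace ℝ (Fin d) := (WithLp.equiv 2 (Fin d → ℝ)).symm (fun i => |w i|) with ha
  set o : EuclideanSpace ℝ (Fin d) := (WithLp.equiv 2 (Fin d → ℝ)).symm (fun _ => 1) with ho
  have hinner : ⟪o, a⟫ = norm1 w := by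
    simp [ha, ho, norm1, PiLp.inner_apply, RCLike.inner_apply]
  have hna : ‖a‖ = ‖w‖ := by
    rw [EuclideanSpace.norm_eq, EuclideanSpace.norm_eq]
    congr 1
    apply Finset.sum_congr rfl
    intro i _
    simp [ha, abs_abs]
  have hno : ‖o‖ = Real.sqrt d := by
    rw [EuclideanSpace.norm_eq]
    simp [ho]
  calc norm1 w = ⟪o, a⟫ := hinner.symm
    _ ≤ ‖o‖ * ‖a‖ := real_inner_le_norm _ _
    _ = Real.sqrt d * ‖w‖ := by rw [hna, hno]

/-- Descent inequality for one Lion step: if `f` is `L`-smooth and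
`x' = x − η(sign(v) + λ x)` with `‖x' − x‖² ≤ 4η²d`, then
`f(x') ≤ f(x) + 2η√d ‖∇f(x) − v‖ − (η/2)‖∇f(x)‖₁ + ηλ‖∇f(x)‖₁‖x‖_∞ + 2η²Ld`,
and equivalently
`f(x') ≤ f(x) + 2η√d ‖∇f(x) − v‖ − η(1 − λ‖x‖_∞)‖∇f(x)‖₁ + 2η²Ld`. -/
theorem lion_descent_step {d : ℕ} (f : EuclideanSpace ℝ (Fin d) → ℝ)
    (gradf : EuclideanSpace ℝ (Fin d) → EuclideanSpace ℝ (Fin d))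
    (L η lam : ℝ) (hL : 0 ≤ L) (hη : 0 < η) (hlam : 0 ≤ lam)
    (hdiff : ∀ y, HasGradientAt f (gradf y) y)
    (hsmooth : ∀ y z, ‖gradf y - gradf z‖ ≤ L * ‖y - z‖)
    (x v x' : EuclideanSpace ℝ (Fin d))
    (hx' : x' = x - η • (sgnV v + lam • x))
    (hstep : ‖x' - x‖ ^ 2 ≤ 4 * η ^ 2 * d) :
    f x' ≤ f x + 2 * η * Real.sqrt d * ‖gradf x - v‖ - (η / 2) * norm1 (gradf x)
        + η * lam * norm1 (gradf x) * normInf x + 2 * η ^ 2 * L * d ∧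
    f x' ≤ f x + 2 * η * Real.sqrt d * ‖gradf x - v‖
        - η * (1 - lam * normInf x) * norm1 (gradf x) + 2 * η ^ 2 * L * d := by
  set g := gradf x with hg
  -- descent lemma
  have hdesc : f x' ≤ f x + ⟪g, x' - x⟫ + L / 2 * ‖x' - x‖ ^ 2 :=
    descent_lemma f gradf L hL hdiff hsmooth x x'
  -- quadratic term bound
  have hquad : L / 2 * ‖x' - x‖ ^ 2 ≤ 2 * η ^ 2 * L * d := by
    rcases eq_or_lt_of_le hL with h | h
    · rw [← h]; simp
    · calc L / 2 * ‖x' - x‖ ^ 2 ≤ L / 2 * (4 * η ^ 2 * d) := by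
            apply mul_le_mul_of_nonneg_left hstep (by linarith)
        _ = 2 * η ^ 2 * L * d := by ring
  -- inner product expansion
  have hdiffxy : x' - x = -η • (sgnV v + lam • x) := by rw [hx']; module
  have hinner : ⟪g, x' - x⟫ = -η * (⟪g, sgnV v⟫ + lam * ⟪g, x⟫) := by
    rw [hdiffxy, inner_smul_right, inner_add_right, inner_smul_right]
    try ring
  -- ⟪g, sgnV g⟫ = norm1 g
  have hsgn_self : ⟪g, sgnV g⟫ = norm1 g := by
    simp only [PiLp.inner_apply, RCLike.inner_apply, norm1]
    apply Finset.sum_congr rfl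
    intro i _
    simp only [sgnV, WithLp.equiv_symm_apply, PiLp.toLp_apply, conj_trivial]
    by_cases hgi : g i < 0
    · simp [hgi, abs_of_neg hgi]
    · simp [hgi, abs_of_nonneg (not_lt.mp hgi)]
  -- sign-switch bound, coordinate-wise
  have hswitch : ⟪g, sgnV g - sgnV v⟫ ≤ 2 * norm1 (g - v) := by
    simp only [PiLp.inner_apply, RCLike.inner_apply, norm1, conj_trivial, Finset.mul_sum]
    apply Finset.sum_le_sum
    intro i _
    simp only [PiLp.sub_apply, sgnV, WithLp.equiv_symm_apply, PiLp.toLp_apply]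
    by_cases hgi : g i < 0 <;> by_cases hvi : v i < 0
    · simp [hgi, hvi]
    · push_neg at hvi
      rw [if_pos hgi, if_neg (not_lt.mpr hvi)]
      rw [abs_of_nonpos (by linarith : g i - v i ≤ 0)]
      nlinarith
    · push_neg at hgi
      rw [if_neg (not_lt.mpr hgi), if_pos hvi]
      rw [abs_of_nonneg (by linarith : 0 ≤ g i - v i)]
      nlinarith
    · simp [hgi, hvi]
  -- ℓ1 of difference vs Euclidean
  have hl1 : norm1 (g - v) ≤ Real.sqrt d * ‖g - v‖ := norm1_le_sqrt_mul_norm _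
  -- normInf bound
  have hinf : ∀ i, |x i| ≤ normInf x := by
    intro i
    unfold normInf
    exact le_ciSup (Set.Finite.bddAbove (Set.finite_range fun j => |x j|)) i
  have hinf_nonneg : 0 ≤ normInf x := by
    rcases isEmpty_or_nonempty (Fin d) with h | h
    · simp [normInf, Real.iSup_of_isEmpty]
    · exact le_trans (abs_nonneg _) (hinf (Classical.arbitrary _))
  have hgx : |⟪g, x⟫| ≤ norm1 g * normInf x := by
    simp only [PiLp.inner_apply, RCLike.inner_apply, conj_trivial, norm1]
    rw [show (∑ i, x i * g i) = ∑ i, g i * x i from Finset.sum_congr rfl fun i _ => mul_comm _ _]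
    calc |∑ i, g i * x i| ≤ ∑ i, |g i * x i| := Finset.abs_sum_le_sum_abs _ _
      _ ≤ ∑ i, |g i| * normInf x := by
          apply Finset.sum_le_sum
          intro i _
          rw [abs_mul]
          exact mul_le_mul_of_nonneg_left (hinf i) (abs_nonneg _)
      _ = (∑ i, |g i|) * normInf x := by rw [Finset.sum_mul]
  -- combine: bound on ⟪g, x' - x⟫
  have hswitch2 : -⟪g, sgnV v⟫ ≤ -norm1 g + 2 * Real.sqrt d * ‖g - v‖ := by
    have : ⟪g, sgnV g - sgnV v⟫ = ⟪g, sgnV g⟫ - ⟪g, sgnV v⟫ := inner_sub_right _ _ _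
    nlinarith [hswitch, hl1]
  have hmain : ⟪g, x' - x⟫ ≤
      η * (-norm1 g + 2 * Real.sqrt d * ‖g - v‖ + lam * (norm1 g * normInf x)) := by
    rw [hinner]
    have h1 : -⟪g, x⟫ ≤ norm1 g * normInf x :=
      le_trans (neg_le_abs _) hgx
    have h2 : -(lam * ⟪g, x⟫) ≤ lam * (norm1 g * normInf x) := by
      calc -(lam * ⟪g, x⟫) = lam * (-⟪g, x⟫) := by ring
        _ ≤ lam * (norm1 g * normInf x) := mul_le_mul_of_nonneg_left h1 hlam
    calc -η * (⟪g, sgnV v⟫ + lam * ⟪g, x⟫)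
        = η * (-⟪g, sgnV v⟫ + -(lam * ⟪g, x⟫)) := by ring
      _ ≤ η * (-norm1 g + 2 * Real.sqrt d * ‖g - v‖ + lam * (norm1 g * normInf x)) := by
          apply mul_le_mul_of_nonneg_left _ hη.le
          linarith
  have hkey : f x' ≤ f x + 2 * η * Real.sqrt d * ‖g - v‖
      - η * (1 - lam * normInf x) * norm1 g + 2 * η ^ 2 * L * d := by
    calc f x' ≤ f x + ⟪g, x' - x⟫ + L / 2 * ‖x' - x‖ ^ 2 := hdesc
      _ ≤ f x + η * (-norm1 g + 2 * Real.sqrt d * ‖g - v‖ + lam * (norm1 g * normInf x))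
          + 2 * η ^ 2 * L * d := by linarith
      _ = f x + 2 * η * Real.sqrt d * ‖g - v‖
          - η * (1 - lam * normInf x) * norm1 g + 2 * η ^ 2 * L * d := by ring
  have hn1 : 0 ≤ norm1 g := Finset.sum_nonneg fun i _ => abs_nonneg _
  constructor
  · calc f x' ≤ f x + 2 * η * Real.sqrt d * ‖g - v‖
        - η * (1 - lam * normInf x) * norm1 g + 2 * η ^ 2 * L * d := hkey
      _ ≤ f x + 2 * η * Real.sqrt d * ‖g - v‖ - (η / 2) * norm1 g
        + η * lam * norm1 g * normInf x + 2 * η ^ 2 * L * d := by nlinarith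
  · exact hkey
end

section
/- In the distributed setting with n nodes, suppose each node runs v_{t+1}ʲ = (1−β₁)m_tʲ + β₁∇f_j(x_{t+1};ξ_{t+1}ʲ), where each f_j is L-smooth, stochastic gradients on each node are unbiased with variance ≤ σ², noises across nodes are independent, and ‖x_{t+1} − x_t‖² ≤ 4η²d. Then E[‖(1/n)Σ_j v_{t+1}ʲ − ∇f(x_{t+1})‖²] ≤ (1−β₁) E[‖(1/n)Σ_j m_tʲ − ∇f(x_t)‖²] + β₁²σ²/n + 8L²η²d/β₁, where ∇f = (1/n)Σ_j ∇f_j. -/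
open MeasureTheory Finset

open scoped ENNReal RealInnerProductSpace

theorem dl_map_eval {Ω₀ : Type*} [MeasurableSpace Ω₀] (μ₀ : Measure Ω₀)
    [IsProbabilityMeasure μ₀] {n : ℕ} (j : Fin n) :
    (Measure.pi fun _ : Fin n => μ₀).map (fun ω => ω j) = μ₀ := by
  ext s hs
  rw [Measure.map_apply (measurable_pi_apply j) hs]
  have hpre : (fun ω : Fin n → Ω₀ => ω j) ⁻¹' s
      = Set.pi Set.univ (Function.update (fun _ : Fin n => (Set.univ : Set Ω₀)) j s) := by
    ext ω
    simp only [Set.mem_preimage, Set.mem_pi, Set.mem_univ, true_implies]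
    constructor
    · intro h i
      rcases eq_or_ne i j with rfl | hij
      · simpa using h
      · simp [Function.update_of_ne hij]
    · intro h; simpa using h j
  rw [hpre, Measure.pi_pi, ← Finset.mul_prod_erase Finset.univ _ (Finset.mem_univ j)]
  rw [Function.update_self]
  have : ∀ i ∈ Finset.univ.erase j,
      μ₀ (Function.update (fun _ : Fin n => (Set.univ : Set Ω₀)) j s i) = 1 := by
    intro i hi
    rw [Function.update_of_ne (Finset.ne_of_mem_erase hi)]
    exact measure_univ
  rw [Finset.prod_congr rfl this, Finset.prod_const_one, mul_one]

theorem dl_integral_eval {Ω₀ : Type*} [MeasurableSpace Ω₀] (μ₀ : Measure Ω₀)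
    [IsProbabilityMeasure μ₀] {n : ℕ} (j : Fin n)
    {F : Type*} [NormedAddCommGroup F] [NormedSpace ℝ F]
    (f : Ω₀ → F) (hf : AEStronglyMeasurable f μ₀) :
    ∫ ω, f (ω j) ∂(Measure.pi fun _ : Fin n => μ₀) = ∫ a, f a ∂μ₀ := by
  have h := dl_map_eval μ₀ j
  calc ∫ ω, f (ω j) ∂(Measure.pi fun _ : Fin n => μ₀)
      = ∫ a, f a ∂((Measure.pi fun _ : Fin n => μ₀).map (fun ω => ω j)) :=
        (integral_map (measurable_pi_apply j).aemeasurable (by rw [h]; exact hf)).symm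
    _ = ∫ a, f a ∂μ₀ := by rw [h]

theorem dl_integrable_eval_iff {Ω₀ : Type*} [MeasurableSpace Ω₀] (μ₀ : Measure Ω₀)
    [IsProbabilityMeasure μ₀] {n : ℕ} (j : Fin n)
    {F : Type*} [NormedAddCommGroup F]
    (f : Ω₀ → F) (hf : AEStronglyMeasurable f μ₀) :
    Integrable (fun ω => f (ω j)) (Measure.pi fun _ : Fin n => μ₀) ↔ Integrable f μ₀ := by
  have h := dl_map_eval μ₀ j
  have h2 : Integrable f μ₀ ↔ Integrable f ((Measure.pi fun _ : Fin n => μ₀).map (fun ω => ω j)) := by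
    rw [h]
  rw [h2]
  exact (integrable_map_measure (by rw [h]; exact hf) (measurable_pi_apply j).aemeasurable).symm

theorem dl_map_pair {Ω₀ : Type*} [MeasurableSpace Ω₀] (μ₀ : Measure Ω₀)
    [IsProbabilityMeasure μ₀] {n : ℕ} {j k : Fin n} (hjk : j ≠ k) :
    (Measure.pi fun _ : Fin n => μ₀).map (fun ω => (ω j, ω k)) = μ₀.prod μ₀ := by
  have hm : Measurable (fun ω : Fin n → Ω₀ => (ω j, ω k)) :=
    (measurable_pi_apply j).prodMk (measurable_pi_apply k)
  refine (Measure.prod_eq fun s t hs ht => ?_).symm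
  rw [Measure.map_apply hm (hs.prod ht)]
  have hpre : (fun ω : Fin n → Ω₀ => (ω j, ω k)) ⁻¹' (s ×ˢ t)
      = Set.pi Set.univ (fun i => if i = j then s else if i = k then t else Set.univ) := by
    ext ω
    simp only [Set.mem_preimage, Set.mem_prod, Set.mem_pi, Set.mem_univ, true_implies]
    constructor
    · rintro ⟨h1, h2⟩ i
      rcases eq_or_ne i j with rfl | hij
      · simp [h1]
      rcases eq_or_ne i k with rfl | hik
      · simp [hjk.symm, h2]
      · simp [hij, hik]
    · intro h
      refine ⟨by simpa using h j, ?_⟩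
      have := h k
      simpa [hjk.symm] using this
  rw [hpre, Measure.pi_pi, ← Finset.mul_prod_erase Finset.univ _ (Finset.mem_univ j)]
  have hk' : k ∈ Finset.univ.erase j := Finset.mem_erase.mpr ⟨hjk.symm, Finset.mem_univ k⟩
  rw [← Finset.mul_prod_erase _ _ hk']
  have h1 : ∀ i ∈ (Finset.univ.erase j).erase k,
      μ₀ (if i = j then s else if i = k then t else Set.univ) = 1 := by
    intro i hi
    have hik : i ≠ k := (Finset.mem_erase.mp hi).1
    have hij : i ≠ j := (Finset.mem_erase.mp (Finset.mem_erase.mp hi).2).1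
    simp [hij, hik]
  rw [Finset.prod_congr rfl h1, Finset.prod_const_one, mul_one]
  simp [hjk.symm, mul_comm]

theorem dl_key {Ω₀ : Type*} [MeasurableSpace Ω₀] (μ₀ : Measure Ω₀)
    [IsProbabilityMeasure μ₀] {d n : ℕ}
    (K : Fin n → Ω₀ → EuclideanSpace ℝ (Fin d)) (hK : ∀ j, Measurable (K j))
    (c : EuclideanSpace ℝ (Fin d))
    (h : Integrable (fun ω : Fin n → Ω₀ => ‖c + ∑ i, K i (ω i)‖ ^ 2)
      (Measure.pi fun _ : Fin n => μ₀)) (j : Fin n) :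
    Integrable (fun a => ‖K j a‖ ^ 2) μ₀ := by
  have hΩ : Nonempty Ω₀ := by
    rcases nonempty_of_measure_ne_zero (μ := μ₀) (s := Set.univ) (by simp) with ⟨a, _⟩
    exact ⟨a⟩
  set F : (Fin n → Ω₀) → ℝ≥0∞ := fun ω => ENNReal.ofReal (‖c + ∑ i, K i (ω i)‖ ^ 2) with hF
  have hmeas_sum : Measurable fun ω : Fin n → Ω₀ => c + ∑ i, K i (ω i) :=
    measurable_const.add (Finset.measurable_sum _ fun i _ => (hK i).comp (measurable_pi_apply i))
  have hFmeas : Measurable F := (hmeas_sum.norm.pow_const 2).ennreal_ofReal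
  have hfin : ∫⁻ ω, F ω ∂(Measure.pi fun _ : Fin n => μ₀) < ⊤ := by
    have h2 := h.2
    rw [hasFiniteIntegral_iff_ofReal (Filter.Eventually.of_forall fun ω => by positivity)] at h2
    exact h2
  obtain ⟨x₀⟩ : Nonempty (Fin n → Ω₀) := ⟨fun _ => Classical.arbitrary Ω₀⟩
  rw [lintegral_eq_lmarginal_univ x₀,
    lmarginal_erase' _ hFmeas (Finset.mem_univ j)] at hfin
  have hex : ∃ x : Fin n → Ω₀, ∫⁻ y, F (Function.update x j y) ∂μ₀ < ⊤ := by
    by_contra hcon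
    push_neg at hcon
    have htop : (∫⋯∫⁻_(Finset.univ.erase j),
        (fun x => ∫⁻ y, F (Function.update x j y) ∂μ₀) ∂(fun _ => μ₀)) x₀ = ⊤ := by
      simp only [lmarginal]
      have hz : ∀ z, (∫⁻ y, F (Function.update
          (Function.updateFinset x₀ (Finset.univ.erase j) z) j y) ∂μ₀) = ⊤ :=
        fun z => top_le_iff.mp (hcon _)
      rw [lintegral_congr hz, lintegral_const]
      simp
    rw [htop] at hfin
    exact absurd hfin (lt_irrefl ⊤)
  obtain ⟨x₁, hx₁⟩ := hex
  set C : EuclideanSpace ℝ (Fin d) := c + ∑ i ∈ Finset.univ.erase j, K i (x₁ i) with hC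
  have hupd : ∀ y, F (Function.update x₁ j y) = ENNReal.ofReal (‖C + K j y‖ ^ 2) := by
    intro y
    have hsum : ∑ i, K i (Function.update x₁ j y i)
        = K j y + ∑ i ∈ Finset.univ.erase j, K i (x₁ i) := by
      rw [← Finset.add_sum_erase Finset.univ (fun i => K i (Function.update x₁ j y i))
        (Finset.mem_univ j)]
      congr 1
      · rw [Function.update_self]
      · exact Finset.sum_congr rfl fun i hi => by
          rw [Function.update_of_ne (Finset.ne_of_mem_erase hi)]
    simp only [hF, hsum, hC]
    rw [show c + (K j y + ∑ i ∈ Finset.univ.erase j, K i (x₁ i))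
      = c + ∑ i ∈ Finset.univ.erase j, K i (x₁ i) + K j y by abel]
  rw [lintegral_congr hupd] at hx₁
  have hmeas' : Measurable fun y => ENNReal.ofReal (‖C + K j y‖ ^ 2) :=
    ((measurable_const.add (hK j)).norm.pow_const 2).ennreal_ofReal
  have hbound : ∀ y, ENNReal.ofReal (‖K j y‖ ^ 2)
      ≤ 2 * ENNReal.ofReal (‖C + K j y‖ ^ 2) + ENNReal.ofReal (2 * ‖C‖ ^ 2) := by
    intro y
    have h2 : ‖K j y‖ ≤ ‖C + K j y‖ + ‖C‖ := by
      have h3 := norm_sub_le (C + K j y) C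
      simpa using h3
    have h1 : ‖K j y‖ ^ 2 ≤ 2 * ‖C + K j y‖ ^ 2 + 2 * ‖C‖ ^ 2 := by
      have h4 : ‖K j y‖ ^ 2 ≤ (‖C + K j y‖ + ‖C‖) ^ 2 := pow_le_pow_left₀ (norm_nonneg _) h2 2
      nlinarith [sq_nonneg (‖C + K j y‖ - ‖C‖)]
    calc ENNReal.ofReal (‖K j y‖ ^ 2)
        ≤ ENNReal.ofReal (2 * ‖C + K j y‖ ^ 2 + 2 * ‖C‖ ^ 2) := ENNReal.ofReal_le_ofReal h1
      _ = ENNReal.ofReal (2 * ‖C + K j y‖ ^ 2) + ENNReal.ofReal (2 * ‖C‖ ^ 2) :=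
          ENNReal.ofReal_add (by positivity) (by positivity)
      _ ≤ 2 * ENNReal.ofReal (‖C + K j y‖ ^ 2) + ENNReal.ofReal (2 * ‖C‖ ^ 2) := by
          rw [ENNReal.ofReal_mul (by norm_num)]
          simp [ENNReal.ofReal_ofNat]
  refine ⟨((hK j).norm.pow_const 2).aestronglyMeasurable, ?_⟩
  rw [hasFiniteIntegral_iff_ofReal (Filter.Eventually.of_forall fun a => by positivity)]
  calc ∫⁻ y, ENNReal.ofReal (‖K j y‖ ^ 2) ∂μ₀
      ≤ ∫⁻ y, (2 * ENNReal.ofReal (‖C + K j y‖ ^ 2) + ENNReal.ofReal (2 * ‖C‖ ^ 2)) ∂μ₀ :=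
        lintegral_mono hbound
    _ = 2 * (∫⁻ y, ENNReal.ofReal (‖C + K j y‖ ^ 2) ∂μ₀) + ENNReal.ofReal (2 * ‖C‖ ^ 2) := by
        rw [lintegral_add_right _ measurable_const, lintegral_const_mul 2 hmeas',
          lintegral_const]
        simp
    _ < ⊤ := by
        refine ENNReal.add_lt_top.mpr ⟨?_, ENNReal.ofReal_lt_top⟩
        exact ENNReal.mul_lt_top (by norm_num) hx₁
theorem dl_slice {Ω₀ : Type*} [MeasurableSpace Ω₀] (μ₀ : Measure Ω₀)
    [IsProbabilityMeasure μ₀] {d n : ℕ}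
    (K : Fin n → Ω₀ → EuclideanSpace ℝ (Fin d)) (hK : ∀ j, Measurable (K j))
    (h0 : ∀ j, ∫ a, K j a ∂μ₀ = 0) (c : EuclideanSpace ℝ (Fin d)) {r : ℝ} (hr : r ≠ 0) :
    ∫ ω, ‖c + r • ∑ j, K j (ω j)‖ ^ 2 ∂(Measure.pi fun _ : Fin n => μ₀)
      ≤ ‖c‖ ^ 2 + r ^ 2 * ∑ j, ∫ a, ‖K j a‖ ^ 2 ∂μ₀ := by
  have hRHS0 : 0 ≤ r ^ 2 * ∑ j, ∫ a, ‖K j a‖ ^ 2 ∂μ₀ := by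
    apply mul_nonneg (sq_nonneg r)
    exact Finset.sum_nonneg fun j _ => integral_nonneg fun a => by positivity
  by_cases hgood : ∀ j, Integrable (fun a => ‖K j a‖ ^ 2) μ₀
  · -- the nice case
    have hKsm : ∀ j, AEStronglyMeasurable (K j) μ₀ := fun j => (hK j).aestronglyMeasurable
    have hL2 := hgood
    have hL1 : ∀ j, Integrable (K j) μ₀ := by
      intro j
      refine Integrable.mono' ((hL2 j).add (integrable_const 1)) (hKsm j)
        (Filter.Eventually.of_forall fun a => ?_)
      simp only [Pi.add_apply]
      nlinarith [norm_nonneg (K j a), sq_nonneg (‖K j a‖ - 1)]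
    have hI2 : ∀ j, Integrable (fun ω : Fin n → Ω₀ => ‖K j (ω j)‖ ^ 2)
        (Measure.pi fun _ : Fin n => μ₀) := fun j =>
      (dl_integrable_eval_iff μ₀ j _ ((hK j).norm.pow_const 2).aestronglyMeasurable).mpr (hL2 j)
    have hI1 : ∀ j, Integrable (fun ω : Fin n → Ω₀ => K j (ω j))
        (Measure.pi fun _ : Fin n => μ₀) := fun j =>
      (dl_integrable_eval_iff μ₀ j _ (hKsm j)).mpr (hL1 j)
    have hIinner : ∀ j k, Integrable (fun ω : Fin n → Ω₀ => ⟪K j (ω j), K k (ω k)⟫)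
        (Measure.pi fun _ : Fin n => μ₀) := by
      intro j k
      refine Integrable.mono' ((hI2 j).add (hI2 k))
        (Measurable.aestronglyMeasurable ?_) (Filter.Eventually.of_forall fun ω => ?_)
      · exact Measurable.inner ((hK j).comp (measurable_pi_apply j))
          ((hK k).comp (measurable_pi_apply k))
      · simp only [Pi.add_apply, Real.norm_eq_abs]
        have h1 := abs_real_inner_le_norm (K j (ω j)) (K k (ω k))
        nlinarith [sq_nonneg (‖K j (ω j)‖ - ‖K k (ω k)‖)]
    have hpt : ∀ ω : Fin n → Ω₀, ‖c + r • ∑ j, K j (ω j)‖ ^ 2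
        = ‖c‖ ^ 2 + (2 * r) * ∑ j, ⟪c, K j (ω j)⟫
          + r ^ 2 * ∑ j, ∑ k, ⟪K j (ω j), K k (ω k)⟫ := by
      intro ω
      have e1 : ⟪c, r • ∑ j, K j (ω j)⟫ = r * ∑ j, ⟪c, K j (ω j)⟫ := by
        rw [real_inner_smul_right, inner_sum]
      have e2 : ‖r • ∑ j, K j (ω j)‖ ^ 2 = r ^ 2 * ∑ j, ∑ k, ⟪K j (ω j), K k (ω k)⟫ := by
        rw [← real_inner_self_eq_norm_sq, real_inner_smul_left, real_inner_smul_right, sum_inner]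
        simp_rw [inner_sum]
        ring
      rw [norm_add_sq_real, e1, e2]
      ring
    rw [integral_congr_ae (Filter.Eventually.of_forall hpt)]
    have hf2 : Integrable (fun ω : Fin n → Ω₀ => (2 * r) * ∑ j, ⟪c, K j (ω j)⟫)
        (Measure.pi fun _ : Fin n => μ₀) :=
      (integrable_finset_sum _ fun j _ => (hI1 j).const_inner c).const_mul _
    have hf3 : Integrable (fun ω : Fin n → Ω₀ => r ^ 2 * ∑ j, ∑ k, ⟪K j (ω j), K k (ω k)⟫)
        (Measure.pi fun _ : Fin n => μ₀) :=
      (integrable_finset_sum _ fun j _ => integrable_finset_sum _ fun k _ => hIinner j k).const_mul _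
    have h12 : Integrable (fun ω : Fin n → Ω₀ => ‖c‖ ^ 2 + (2 * r) * ∑ j, ⟪c, K j (ω j)⟫)
        (Measure.pi fun _ : Fin n => μ₀) := (integrable_const _).add hf2
    rw [integral_add h12 hf3, integral_add (integrable_const _) hf2,
      integral_const, integral_const_mul, integral_const_mul,
      integral_finset_sum _ fun j _ => (hI1 j).const_inner c,
      integral_finset_sum _ fun j _ => integrable_finset_sum _ fun k _ => hIinner j k]
    have hz : ∀ j : Fin n, ∫ ω : Fin n → Ω₀, ⟪c, K j (ω j)⟫ ∂(Measure.pi fun _ : Fin n => μ₀)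
        = 0 := by
      intro j
      rw [dl_integral_eval μ₀ j (fun a => ⟪c, K j a⟫)
        (Measurable.inner measurable_const (hK j)).aestronglyMeasurable,
        integral_inner (hL1 j), h0 j, inner_zero_right]
    have hdiag : ∀ j : Fin n, ∫ ω : Fin n → Ω₀, ⟪K j (ω j), K j (ω j)⟫
        ∂(Measure.pi fun _ : Fin n => μ₀) = ∫ a, ‖K j a‖ ^ 2 ∂μ₀ := by
      intro j
      rw [integral_congr_ae (Filter.Eventually.of_forall
        fun ω : Fin n → Ω₀ => real_inner_self_eq_norm_sq (K j (ω j))),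
        dl_integral_eval μ₀ j (fun a => ‖K j a‖ ^ 2)
          ((hK j).norm.pow_const 2).aestronglyMeasurable]
    have hoff : ∀ j k : Fin n, j ≠ k → ∫ ω : Fin n → Ω₀, ⟪K j (ω j), K k (ω k)⟫
        ∂(Measure.pi fun _ : Fin n => μ₀) = 0 := by
      intro j k hjk
      have hmapm : Measurable (fun ω : Fin n → Ω₀ => (ω j, ω k)) :=
        (measurable_pi_apply j).prodMk (measurable_pi_apply k)
      have hAESM : AEStronglyMeasurable (fun p : Ω₀ × Ω₀ => ⟪K j p.1, K k p.2⟫)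
          ((Measure.pi fun _ : Fin n => μ₀).map (fun ω => (ω j, ω k))) := by
        rw [dl_map_pair μ₀ hjk]
        exact (Measurable.inner ((hK j).comp measurable_fst)
          ((hK k).comp measurable_snd)).aestronglyMeasurable
      have step1 : ∫ ω : Fin n → Ω₀, ⟪K j (ω j), K k (ω k)⟫ ∂(Measure.pi fun _ : Fin n => μ₀)
          = ∫ p : Ω₀ × Ω₀, ⟪K j p.1, K k p.2⟫ ∂(μ₀.prod μ₀) := by
        rw [← dl_map_pair μ₀ hjk]
        exact (integral_map hmapm.aemeasurable hAESM).symm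
      rw [step1]
      have hprodint : Integrable (fun p : Ω₀ × Ω₀ => ⟪K j p.1, K k p.2⟫) (μ₀.prod μ₀) := by
        refine Integrable.mono' ((hL1 j).norm.mul_prod (hL1 k).norm)
          (Measurable.aestronglyMeasurable (Measurable.inner ((hK j).comp measurable_fst)
            ((hK k).comp measurable_snd))) (Filter.Eventually.of_forall fun p => ?_)
        simpa [Real.norm_eq_abs] using abs_real_inner_le_norm (K j p.1) (K k p.2)
      rw [MeasureTheory.integral_prod _ hprodint]
      have hb : ∀ a : Ω₀, ∫ b, ⟪K j a, K k b⟫ ∂μ₀ = 0 := fun a => by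
        rw [integral_inner (hL1 k), h0 k, inner_zero_right]
      rw [integral_congr_ae (Filter.Eventually.of_forall hb), integral_zero]
    have hsum2 : ∀ j : Fin n, ∫ ω : Fin n → Ω₀, ∑ k, ⟪K j (ω j), K k (ω k)⟫
        ∂(Measure.pi fun _ : Fin n => μ₀) = ∫ a, ‖K j a‖ ^ 2 ∂μ₀ := by
      intro j
      rw [integral_finset_sum _ fun k _ => hIinner j k,
        Finset.sum_eq_single j (fun k _ hkj => hoff j k (Ne.symm hkj))
          (fun h => absurd (Finset.mem_univ j) h), hdiag j]
    rw [Finset.sum_congr rfl fun j _ => hz j, Finset.sum_congr rfl fun j _ => hsum2 j]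
    simp [measure_univ]
  · push_neg at hgood
    obtain ⟨j, hj⟩ := hgood
    have hnot : ¬ Integrable (fun ω : Fin n → Ω₀ => ‖c + r • ∑ j, K j (ω j)‖ ^ 2)
        (Measure.pi fun _ : Fin n => μ₀) := by
      intro hint
      have heq : (fun ω : Fin n → Ω₀ => ‖c + r • ∑ j, K j (ω j)‖ ^ 2)
          = fun ω : Fin n → Ω₀ => ‖c + ∑ j, (fun a => r • K j a) (ω j)‖ ^ 2 := by
        funext ω
        rw [Finset.smul_sum]
      rw [heq] at hint
      have := dl_key μ₀ (fun j a => r • K j a) (fun j => (hK j).const_smul r) c hint j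
      apply hj
      have heq2 : (fun a => ‖r • K j a‖ ^ 2) = fun a => r ^ 2 * ‖K j a‖ ^ 2 := by
        funext a
        rw [norm_smul, mul_pow, Real.norm_eq_abs, sq_abs]
      rw [heq2] at this
      have := this.const_mul (r ^ 2)⁻¹
      simpa [mul_assoc, inv_mul_cancel_left₀ (pow_ne_zero 2 hr)] using this
    rw [integral_undef hnot]
    positivity
theorem dl_young {E : Type*} [NormedAddCommGroup E] {t : ℝ} (ht : 0 < t) (a b : E) :
    ‖a + b‖ ^ 2 ≤ (1 + t) * ‖a‖ ^ 2 + (1 + t⁻¹) * ‖b‖ ^ 2 := by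
  have h2 : ‖a + b‖ ^ 2 ≤ (‖a‖ + ‖b‖) ^ 2 :=
    pow_le_pow_left₀ (norm_nonneg _) (norm_add_le a b) 2
  have key : 2 * ‖a‖ * ‖b‖ ≤ t * ‖a‖ ^ 2 + t⁻¹ * ‖b‖ ^ 2 := by
    rw [← sub_nonneg]
    have hexp : t * ‖a‖ ^ 2 + t⁻¹ * ‖b‖ ^ 2 - 2 * ‖a‖ * ‖b‖ = t⁻¹ * (t * ‖a‖ - ‖b‖) ^ 2 := by
      field_simp
      ring
    rw [hexp]
    positivity
  nlinarith [h2, key]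

set_option maxHeartbeats 1000000 in
/-- One-step error bound for the averaged momentum estimator in the distributed Lion
optimizer with `n` nodes. Past randomness (producing `m_tʲ`, `x_t`, `x_{t+1}`) lives on
`Ω₁`; the fresh node samples `ξ_{t+1}ʲ` are independent, modelled by the product measure
on `Fin n → Ω₀`. Node `j`'s oracle `G j y ω₀ = ∇f_j(y; ξ)` is unbiased for `∇f_j(y)` with
variance at most `σ²`, each `f_j` is `L`-smooth, the step satisfies
`‖x_{t+1} − x_t‖² ≤ 4η²d`, and `v_{t+1}ʲ = (1−β₁)m_tʲ + β₁∇f_j(x_{t+1};ξ_{t+1}ʲ)`. Then,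
with `∇f = (1/n)Σ_j ∇f_j`,
`E[‖(1/n)Σ_j v_{t+1}ʲ − ∇f(x_{t+1})‖²]
  ≤ (1−β₁) E[‖(1/n)Σ_j m_tʲ − ∇f(x_t)‖²] + β₁²σ²/n + 8L²η²d/β₁`. -/
theorem distributed_lion_one_step {d n : ℕ} (hn : 0 < n) {Ω₁ Ω₀ : Type*}
    [MeasurableSpace Ω₁] [MeasurableSpace Ω₀]
    (μ₁ : Measure Ω₁) (μ₀ : Measure Ω₀)
    [IsProbabilityMeasure μ₁] [IsProbabilityMeasure μ₀]
    (G : Fin n → EuclideanSpace ℝ (Fin d) → Ω₀ → EuclideanSpace ℝ (Fin d))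
    (gradfj : Fin n → EuclideanSpace ℝ (Fin d) → EuclideanSpace ℝ (Fin d))
    (gradF : EuclideanSpace ℝ (Fin d) → EuclideanSpace ℝ (Fin d))
    (hgradF : ∀ y, gradF y = (n : ℝ)⁻¹ • ∑ j, gradfj j y)
    (L σ β₁ η : ℝ) (hβ : 0 < β₁) (hβ1 : β₁ ≤ 1) (hL : 0 ≤ L) (hη : 0 ≤ η)
    (hsmooth : ∀ j y z, ‖gradfj j y - gradfj j z‖ ≤ L * ‖y - z‖)
    (hunbiased : ∀ j y, ∫ ω₀, G j y ω₀ ∂μ₀ = gradfj j y)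
    (hvar : ∀ j y, ∫ ω₀, ‖G j y ω₀ - gradfj j y‖ ^ 2 ∂μ₀ ≤ σ ^ 2)
    (m : Fin n → Ω₁ → EuclideanSpace ℝ (Fin d))
    (x x' : Ω₁ → EuclideanSpace ℝ (Fin d))
    (hmeasm : ∀ j, Measurable (m j)) (hmeasx : Measurable x) (hmeasx' : Measurable x')
    (hmeasG : ∀ j, Measurable (fun p : EuclideanSpace ℝ (Fin d) × Ω₀ => G j p.1 p.2))
    (hintm : Integrable (fun ω₁ => ‖(n : ℝ)⁻¹ • ∑ j, m j ω₁ - gradF (x ω₁)‖ ^ 2) μ₁)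
    (hstep : ∀ ω₁, ‖x' ω₁ - x ω₁‖ ^ 2 ≤ 4 * η ^ 2 * d)
    (v' : Fin n → Ω₁ → (Fin n → Ω₀) → EuclideanSpace ℝ (Fin d))
    (hv' : ∀ j ω₁ ω₂, v' j ω₁ ω₂ = (1 - β₁) • m j ω₁ + β₁ • G j (x' ω₁) (ω₂ j)) :
    ∫ ω, ‖(n : ℝ)⁻¹ • ∑ j, v' j ω.1 ω.2 - gradF (x' ω.1)‖ ^ 2
        ∂(μ₁.prod (Measure.pi fun _ : Fin n => μ₀))
      ≤ (1 - β₁) * ∫ ω₁, ‖(n : ℝ)⁻¹ • ∑ j, m j ω₁ - gradF (x ω₁)‖ ^ 2 ∂μ₁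
        + β₁ ^ 2 * σ ^ 2 / n + 8 * L ^ 2 * η ^ 2 * d / β₁ := by
  classical
  have hn' : (n : ℝ) ≠ 0 := Nat.cast_ne_zero.mpr hn.ne'
  set r : ℝ := β₁ * (n : ℝ)⁻¹ with hrdef
  have hr : r ≠ 0 := mul_ne_zero hβ.ne' (inv_ne_zero hn')
  set X : Ω₁ → EuclideanSpace ℝ (Fin d) :=
    fun ω₁ => (1 - β₁) • ((n : ℝ)⁻¹ • ∑ j, m j ω₁ - gradF (x' ω₁)) with hX
  set H : Fin n → Ω₁ → Ω₀ → EuclideanSpace ℝ (Fin d) :=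
    fun j ω₁ a => G j (x' ω₁) a - gradfj j (x' ω₁) with hH
  have hHmeas : ∀ j ω₁, Measurable (fun a => H j ω₁ a) := fun j ω₁ =>
    ((hmeasG j).comp (measurable_const.prodMk measurable_id)).sub measurable_const
  have hid : ∀ ω₁ ω₂, (n : ℝ)⁻¹ • ∑ j, v' j ω₁ ω₂ - gradF (x' ω₁)
      = X ω₁ + r • ∑ j, H j ω₁ (ω₂ j) := by
    intro ω₁ ω₂
    simp only [hX, hH, hrdef, hv', hgradF]
    rw [Finset.sum_add_distrib, Finset.sum_sub_distrib, ← Finset.smul_sum, ← Finset.smul_sum]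
    module
  have hACongr : (∫ ω, ‖(n : ℝ)⁻¹ • ∑ j, v' j ω.1 ω.2 - gradF (x' ω.1)‖ ^ 2
        ∂(μ₁.prod (Measure.pi fun _ : Fin n => μ₀)))
      = ∫ ω, ‖X ω.1 + r • ∑ j, H j ω.1 (ω.2 j)‖ ^ 2
        ∂(μ₁.prod (Measure.pi fun _ : Fin n => μ₀)) :=
    integral_congr_ae (Filter.Eventually.of_forall fun ω => by
      dsimp only
      rw [hid ω.1 ω.2])
  rw [hACongr]
  have hInorm : 0 ≤ ∫ ω₁, ‖(n : ℝ)⁻¹ • ∑ j, m j ω₁ - gradF (x ω₁)‖ ^ 2 ∂μ₁ :=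
    integral_nonneg fun ω₁ => by positivity
  have hslice : ∀ ω₁, ∫ ω₂, ‖X ω₁ + r • ∑ j, H j ω₁ (ω₂ j)‖ ^ 2
      ∂(Measure.pi fun _ : Fin n => μ₀) ≤ ‖X ω₁‖ ^ 2 + β₁ ^ 2 * σ ^ 2 / n := by
    intro ω₁
    have h0 : ∀ j, ∫ a, H j ω₁ a ∂μ₀ = 0 := by
      intro j
      by_cases hInt : Integrable (fun a => G j (x' ω₁) a) μ₀
      · simp only [hH]
        rw [integral_sub hInt (integrable_const _), hunbiased j (x' ω₁), integral_const]
        simp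
      · rw [integral_undef]
        intro hcon
        apply hInt
        have h2 := hcon.add (integrable_const (gradfj j (x' ω₁)))
        have : (fun a => H j ω₁ a + gradfj j (x' ω₁)) = fun a => G j (x' ω₁) a := by
          funext a
          simp [hH]
        rwa [← this]
    have hsb := dl_slice μ₀ (fun j => H j ω₁) (fun j => hHmeas j ω₁) h0 (X ω₁) hr
    refine hsb.trans ?_
    have hsum : ∑ j, ∫ a, ‖H j ω₁ a‖ ^ 2 ∂μ₀ ≤ (n : ℝ) * σ ^ 2 := by
      calc ∑ j : Fin n, ∫ a, ‖H j ω₁ a‖ ^ 2 ∂μ₀ ≤ ∑ _j : Fin n, σ ^ 2 :=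
            Finset.sum_le_sum fun j _ => hvar j (x' ω₁)
        _ = (n : ℝ) * σ ^ 2 := by
            simp [Finset.sum_const, Finset.card_univ, nsmul_eq_mul]
    have hfin : r ^ 2 * ∑ j, ∫ a, ‖H j ω₁ a‖ ^ 2 ∂μ₀ ≤ β₁ ^ 2 * σ ^ 2 / n := by
      calc r ^ 2 * ∑ j, ∫ a, ‖H j ω₁ a‖ ^ 2 ∂μ₀ ≤ r ^ 2 * ((n : ℝ) * σ ^ 2) :=
            mul_le_mul_of_nonneg_left hsum (sq_nonneg r)
        _ = β₁ ^ 2 * σ ^ 2 / n := by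
            rw [hrdef]
            field_simp
    linarith
  have hXbound : ∀ ω₁, ‖X ω₁‖ ^ 2
      ≤ (1 - β₁) * ‖(n : ℝ)⁻¹ • ∑ j, m j ω₁ - gradF (x ω₁)‖ ^ 2
        + 4 * L ^ 2 * η ^ 2 * d / β₁ := by
    intro ω₁
    set a : EuclideanSpace ℝ (Fin d) := (n : ℝ)⁻¹ • ∑ j, m j ω₁ - gradF (x ω₁) with ha
    set b : EuclideanSpace ℝ (Fin d) := gradF (x ω₁) - gradF (x' ω₁) with hb
    have hXab : X ω₁ = (1 - β₁) • (a + b) := by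
      simp only [hX, ha, hb]
      congr 1
      abel
    have hbnorm : ‖b‖ ^ 2 ≤ 4 * L ^ 2 * η ^ 2 * d := by
      have hlip : ‖b‖ ≤ L * ‖x ω₁ - x' ω₁‖ := by
        have hbeq : b = (n : ℝ)⁻¹ • ∑ j, (gradfj j (x ω₁) - gradfj j (x' ω₁)) := by
          simp only [hb, hgradF]
          rw [Finset.sum_sub_distrib, smul_sub]
        rw [hbeq, norm_smul, Real.norm_eq_abs, abs_of_nonneg (by positivity)]
        have h1 : ‖∑ j, (gradfj j (x ω₁) - gradfj j (x' ω₁))‖ ≤ (n : ℝ) * (L * ‖x ω₁ - x' ω₁‖) := by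
          refine (norm_sum_le _ _).trans ?_
          calc ∑ j : Fin n, ‖gradfj j (x ω₁) - gradfj j (x' ω₁)‖
              ≤ ∑ _j : Fin n, L * ‖x ω₁ - x' ω₁‖ :=
                Finset.sum_le_sum fun j _ => hsmooth j _ _
            _ = (n : ℝ) * (L * ‖x ω₁ - x' ω₁‖) := by
                simp [Finset.sum_const, Finset.card_univ, nsmul_eq_mul]
        calc (n : ℝ)⁻¹ * ‖∑ j, (gradfj j (x ω₁) - gradfj j (x' ω₁))‖
            ≤ (n : ℝ)⁻¹ * ((n : ℝ) * (L * ‖x ω₁ - x' ω₁‖)) :=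
              mul_le_mul_of_nonneg_left h1 (by positivity)
          _ = L * ‖x ω₁ - x' ω₁‖ := by
              field_simp
      have hsq : ‖b‖ ^ 2 ≤ L ^ 2 * ‖x ω₁ - x' ω₁‖ ^ 2 := by
        have h2 : ‖b‖ ^ 2 ≤ (L * ‖x ω₁ - x' ω₁‖) ^ 2 :=
          pow_le_pow_left₀ (norm_nonneg _) hlip 2
        calc ‖b‖ ^ 2 ≤ (L * ‖x ω₁ - x' ω₁‖) ^ 2 := h2
          _ = L ^ 2 * ‖x ω₁ - x' ω₁‖ ^ 2 := by ring
      have hst : ‖x ω₁ - x' ω₁‖ ^ 2 ≤ 4 * η ^ 2 * d := by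
        rw [norm_sub_rev]
        exact hstep ω₁
      calc ‖b‖ ^ 2 ≤ L ^ 2 * ‖x ω₁ - x' ω₁‖ ^ 2 := hsq
        _ ≤ L ^ 2 * (4 * η ^ 2 * d) := mul_le_mul_of_nonneg_left hst (sq_nonneg L)
        _ = 4 * L ^ 2 * η ^ 2 * d := by ring
    rcases eq_or_lt_of_le hβ1 with heq | hlt
    · rw [hXab, heq]
      simp only [sub_self, zero_smul, norm_zero]
      have : (0:ℝ) ≤ 4 * L ^ 2 * η ^ 2 * d / β₁ := by positivity
      nlinarith [norm_nonneg a]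
    · have h1β : 0 < 1 - β₁ := by linarith
      have htpos : 0 < β₁ / (1 - β₁) := div_pos hβ h1β
      have hyoung := dl_young htpos a b
      have hXnorm : ‖X ω₁‖ ^ 2 = (1 - β₁) ^ 2 * ‖a + b‖ ^ 2 := by
        rw [hXab, norm_smul, Real.norm_eq_abs, mul_pow, sq_abs]
      have e1 : (1 - β₁) ^ 2 * (1 + β₁ / (1 - β₁)) = 1 - β₁ := by
        field_simp
        ring
      have e2 : (1 - β₁) ^ 2 * (1 + (β₁ / (1 - β₁))⁻¹) = (1 - β₁) ^ 2 / β₁ := by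
        rw [inv_div]
        field_simp
        ring
      have hcomb : ‖X ω₁‖ ^ 2 ≤ (1 - β₁) * ‖a‖ ^ 2 + ((1 - β₁) ^ 2 / β₁) * ‖b‖ ^ 2 := by
        rw [hXnorm]
        calc (1 - β₁) ^ 2 * ‖a + b‖ ^ 2
            ≤ (1 - β₁) ^ 2 * ((1 + β₁ / (1 - β₁)) * ‖a‖ ^ 2
                + (1 + (β₁ / (1 - β₁))⁻¹) * ‖b‖ ^ 2) :=
              mul_le_mul_of_nonneg_left hyoung (sq_nonneg _)
          _ = (1 - β₁) * ‖a‖ ^ 2 + ((1 - β₁) ^ 2 / β₁) * ‖b‖ ^ 2 := by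
              rw [mul_add, ← mul_assoc, ← mul_assoc, e1, e2]
      have hb2 : ((1 - β₁) ^ 2 / β₁) * ‖b‖ ^ 2 ≤ 4 * L ^ 2 * η ^ 2 * d / β₁ := by
        have h3 : (1 - β₁) ^ 2 ≤ 1 := by nlinarith
        calc ((1 - β₁) ^ 2 / β₁) * ‖b‖ ^ 2 ≤ (1 / β₁) * ‖b‖ ^ 2 := by
              apply mul_le_mul_of_nonneg_right _ (sq_nonneg _)
              exact (div_le_div_iff_of_pos_right hβ).mpr h3
          _ ≤ (1 / β₁) * (4 * L ^ 2 * η ^ 2 * d) := by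
              apply mul_le_mul_of_nonneg_left hbnorm (by positivity)
          _ = 4 * L ^ 2 * η ^ 2 * d / β₁ := by ring
      linarith
  by_cases hPint : Integrable (fun ω : Ω₁ × (Fin n → Ω₀) =>
      ‖X ω.1 + r • ∑ j, H j ω.1 (ω.2 j)‖ ^ 2) (μ₁.prod (Measure.pi fun _ : Fin n => μ₀))
  · rw [MeasureTheory.integral_prod _ hPint]
    have hgint : Integrable (fun ω₁ =>
        (1 - β₁) * ‖(n : ℝ)⁻¹ • ∑ j, m j ω₁ - gradF (x ω₁)‖ ^ 2
          + (4 * L ^ 2 * η ^ 2 * d / β₁ + β₁ ^ 2 * σ ^ 2 / n)) μ₁ :=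
      (hintm.const_mul _).add (integrable_const _)
    have hmono := integral_mono_of_nonneg
      (f := fun ω₁ => ∫ ω₂, ‖X ω₁ + r • ∑ j, H j ω₁ (ω₂ j)‖ ^ 2
        ∂(Measure.pi fun _ : Fin n => μ₀)) (μ := μ₁)
      (Filter.Eventually.of_forall fun ω₁ =>
        integral_nonneg fun ω₂ => by positivity)
      hgint
      (Filter.Eventually.of_forall fun ω₁ => by
        have hs := hslice ω₁
        have hx := hXbound ω₁
        linarith)
    refine hmono.trans ?_
    rw [integral_add (hintm.const_mul _) (integrable_const _), integral_const_mul,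
      integral_const]
    simp only [measure_univ, probReal_univ, ENNReal.toReal_one, smul_eq_mul, one_mul]
    have h48 : 4 * L ^ 2 * η ^ 2 * (d:ℝ) / β₁ ≤ 8 * L ^ 2 * η ^ 2 * d / β₁ := by
      apply (div_le_div_iff_of_pos_right hβ).mpr
      nlinarith [sq_nonneg L, sq_nonneg η, sq_nonneg (L*η), Nat.cast_nonneg (α := ℝ) d, mul_nonneg (mul_nonneg (sq_nonneg L) (sq_nonneg η)) (Nat.cast_nonneg (α := ℝ) d)]
    linarith
  · rw [integral_undef hPint]
    have h8 : (0:ℝ) ≤ 8 * L ^ 2 * η ^ 2 * d / β₁ := by positivity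
    have hb2 : (0:ℝ) ≤ β₁ ^ 2 * σ ^ 2 / n := by positivity
    have hm0 := mul_nonneg (by linarith : (0:ℝ) ≤ 1 - β₁) hInorm
    linarith
end
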